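/- arXiv:2009.10373 — 4 statements merged into one kernel-verified Lean document; each statement's English description precedes it below -/
import Mathlib

section
/- Let D be a series of length ℓ and r ≥ 0 a warping window. Define L^DTW_i = min over j in [max(1,i-r), min(ℓ,i+r)] of d_j and U^DTW_i = max over the same range. Then for any series D' of length ℓ, LB_Keogh(D, D') = sqrt(Σ_{i=1}^ℓ c_i) ≤ DTW_r(D, D'), where c_i = (d'_i - U^DTW_i)² if d'_i > U^DTW_i, c_i = (d'_i - L^DTW_i)² if d'_i < L^DTW_i, and 0 otherwise, and DTW_r is the DTW distance restricted to warping paths whose index pairs (a,b) satisfy |a-b| ≤ r. -/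
/-- A valid warping path of length `m` between two series of length `ℓ`. -/
def IsWarpingPath (ℓ m : ℕ) (A : ℕ → ℕ × ℕ) : Prop :=
  1 ≤ m ∧ A 0 = (1, 1) ∧ A (m - 1) = (ℓ, ℓ) ∧
  (∀ k < m, 1 ≤ (A k).1 ∧ (A k).1 ≤ ℓ ∧ 1 ≤ (A k).2 ∧ (A k).2 ≤ ℓ) ∧
  (∀ k, k + 1 < m →
    (A k).1 ≤ (A (k + 1)).1 ∧ (A (k + 1)).1 ≤ (A k).1 + 1 ∧
    (A k).2 ≤ (A (k + 1)).2 ∧ (A (k + 1)).2 ≤ (A k).2 + 1 ∧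
    A (k + 1) ≠ A k)

/-- The path stays in the Sakoe-Chiba band of radius `r`: `|a - b| ≤ r`. -/
def InBand (r m : ℕ) (A : ℕ → ℕ × ℕ) : Prop :=
  ∀ k < m, (A k).1 ≤ (A k).2 + r ∧ (A k).2 ≤ (A k).1 + r

/-- Cost of a warping path. -/
noncomputable def pathCost (D D' : ℕ → ℝ) (m : ℕ) (A : ℕ → ℕ × ℕ) : ℝ :=
  Real.sqrt (∑ k ∈ Finset.range m, (D (A k).1 - D' (A k).2) ^ 2)

/-- Band-constrained DTW distance with warping window `r`. -/
noncomputable def dtwBand (D D' : ℕ → ℝ) (ℓ r : ℕ) : ℝ :=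
  sInf { c | ∃ m A, IsWarpingPath ℓ m A ∧ InBand r m A ∧ c = pathCost D D' m A }

/-- `L^DTW_i`: minimum of `D` over positions `j ∈ [max 1 (i-r), min ℓ (i+r)]`. -/
noncomputable def dtwEnvLo (D : ℕ → ℝ) (ℓ r i : ℕ) : ℝ :=
  sInf (D '' {j | max 1 (i - r) ≤ j ∧ j ≤ min ℓ (i + r)})

/-- `U^DTW_i`: maximum of `D` over positions `j ∈ [max 1 (i-r), min ℓ (i+r)]`. -/
noncomputable def dtwEnvHi (D : ℕ → ℝ) (ℓ r i : ℕ) : ℝ :=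
  sSup (D '' {j | max 1 (i - r) ≤ j ∧ j ≤ min ℓ (i + r)})

/-- Per-coordinate LB_Keogh cost. -/
noncomputable def keoghCost (D D' : ℕ → ℝ) (ℓ r i : ℕ) : ℝ :=
  if D' i > dtwEnvHi D ℓ r i then (D' i - dtwEnvHi D ℓ r i) ^ 2
  else if D' i < dtwEnvLo D ℓ r i then (D' i - dtwEnvLo D ℓ r i) ^ 2
  else 0

/-! A warping path moves its column index by at most one per step, so it visits every column
`i ∈ [1, ℓ]`. At such a step the row index `a` lies within `r` of `i`, hence `d_a` lies in the
envelope `[L^DTW_i, U^DTW_i]` and the step costs at least `c_i`. Grouping the steps of any banded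
path by column therefore bounds its squared cost from below by `Σ c_i`. -/

lemma Nat.exists_eq_of_le_of_map_succ_le_succ {g : ℕ → ℕ} {i : ℕ} :
    ∀ {n : ℕ}, (∀ k < n, g (k + 1) ≤ g k + 1) → g 0 ≤ i → i ≤ g n → ∃ k ≤ n, g k = i
  | 0, _, h0, hn => ⟨0, le_rfl, le_antisymm h0 hn⟩
  | n + 1, hstep, h0, hn => by
    by_cases hi : i ≤ g n
    · obtain ⟨k, hk, hki⟩ :=
        exists_eq_of_le_of_map_succ_le_succ (fun k hk => hstep k (by omega)) h0 hi
      exact ⟨k, by omega, hki⟩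
    · exact ⟨n + 1, le_rfl, by have := hstep n (by omega); omega⟩

lemma IsWarpingPath.exists_snd_eq {ℓ m : ℕ} {A : ℕ → ℕ × ℕ} (hA : IsWarpingPath ℓ m A)
    {i : ℕ} (hi : i ∈ Finset.Icc 1 ℓ) : ∃ k < m, (A k).2 = i := by
  obtain ⟨hm, h0, hlast, -, hstep⟩ := hA
  rw [Finset.mem_Icc] at hi
  obtain ⟨k, hk, hki⟩ := Nat.exists_eq_of_le_of_map_succ_le_succ (g := fun k => (A k).2) (i := i)
    (n := m - 1) (fun k hk => (hstep k (by omega)).2.2.2.1) (by simpa [h0] using hi.1)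
    (by simpa [hlast] using hi.2)
  exact ⟨k, by omega, hki⟩

section Envelope

variable {D : ℕ → ℝ} {ℓ r i j : ℕ}

lemma dtwEnvLo_le (hj : j ∈ Set.Icc (max 1 (i - r)) (min ℓ (i + r))) : dtwEnvLo D ℓ r i ≤ D j :=
  csInf_le ((Set.finite_Icc _ _).image D).bddBelow ⟨j, hj, rfl⟩

lemma le_dtwEnvHi (hj : j ∈ Set.Icc (max 1 (i - r)) (min ℓ (i + r))) : D j ≤ dtwEnvHi D ℓ r i :=
  le_csSup ((Set.finite_Icc _ _).image D).bddAbove ⟨j, hj, rfl⟩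

lemma keoghCost_le_sq_sub {D' : ℕ → ℝ} {x : ℝ} (hlo : dtwEnvLo D ℓ r i ≤ x)
    (hhi : x ≤ dtwEnvHi D ℓ r i) : keoghCost D D' ℓ r i ≤ (x - D' i) ^ 2 := by
  unfold keoghCost
  split_ifs <;> nlinarith

end Envelope

lemma sum_keoghCost_le_sum_sq {D D' : ℕ → ℝ} {ℓ r m : ℕ} {A : ℕ → ℕ × ℕ}
    (hA : IsWarpingPath ℓ m A) (hband : InBand r m A) :
    ∑ i ∈ Finset.Icc 1 ℓ, keoghCost D D' ℓ r i ≤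
      ∑ k ∈ Finset.range m, (D (A k).1 - D' (A k).2) ^ 2 := by
  have hmaps : ∀ k ∈ Finset.range m, (A k).2 ∈ Finset.Icc 1 ℓ := fun k hk => by
    obtain ⟨-, -, h1, h2⟩ := hA.2.2.2.1 k (Finset.mem_range.mp hk)
    exact Finset.mem_Icc.mpr ⟨h1, h2⟩
  rw [← Finset.sum_fiberwise_of_maps_to hmaps]
  refine Finset.sum_le_sum fun i hi => ?_
  obtain ⟨k, hk, rfl⟩ := hA.exists_snd_eq hi
  obtain ⟨ha1, haℓ, -, -⟩ := hA.2.2.2.1 k hk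
  obtain ⟨hab, hba⟩ := hband k hk
  have hwindow : (A k).1 ∈ Set.Icc (max 1 ((A k).2 - r)) (min ℓ ((A k).2 + r)) :=
    ⟨max_le ha1 (by omega), le_min haℓ hab⟩
  calc keoghCost D D' ℓ r (A k).2
      ≤ (D (A k).1 - D' (A k).2) ^ 2 :=
        keoghCost_le_sq_sub (dtwEnvLo_le hwindow) (le_dtwEnvHi hwindow)
    _ ≤ ∑ k' ∈ Finset.range m with (A k').2 = (A k).2, (D (A k').1 - D' (A k').2) ^ 2 :=
        Finset.single_le_sum (f := fun k' => (D (A k').1 - D' (A k').2) ^ 2)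
          (fun _ _ => sq_nonneg _) (Finset.mem_filter.mpr ⟨Finset.mem_range.mpr hk, rfl⟩)

lemma isWarpingPath_diagonal {ℓ : ℕ} (hℓ : 1 ≤ ℓ) :
    IsWarpingPath ℓ ℓ (fun k => (k + 1, k + 1)) := by
  refine ⟨hℓ, rfl, by simp [Nat.sub_add_cancel hℓ], fun k hk => ?_, fun k _ => by simp⟩
  dsimp only
  omega

lemma inBand_diagonal (r ℓ : ℕ) : InBand r ℓ (fun k => (k + 1, k + 1)) :=
  fun _ _ => ⟨Nat.le_add_right _ _, Nat.le_add_right _ _⟩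

/-- the LB_Keogh lower bound: for series `D`, `D'` of length `ℓ` and
warping window `r`, `sqrt (Σ_{i=1}^ℓ c_i) ≤ DTW_r(D, D')`. -/
theorem lb_keogh_le_dtw (D D' : ℕ → ℝ) (ℓ r : ℕ) (hℓ : 1 ≤ ℓ) :
    Real.sqrt (∑ i ∈ Finset.Icc 1 ℓ, keoghCost D D' ℓ r i) ≤ dtwBand D D' ℓ r := by
  refine le_csInf ⟨_, ℓ, _, isWarpingPath_diagonal hℓ, inBand_diagonal r ℓ, rfl⟩ ?_
  rintro _ ⟨m, A, hA, hband, rfl⟩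
  exact Real.sqrt_le_sqrt (sum_keoghCost_le_sum_sq hA hband)
end

section
/- Let Q and D be series with |Q| = w·s ≤ |D|. Suppose for each segment i the envelope bounds satisfy L_i ≤ PAA(D_{j,|Q|})_i ≤ U_i for all offsets j represented by the envelope. Define mindist = sqrt(s)·sqrt(Σ_{i=1}^w c_i) where c_i = (PAA(Q)_i - U_i)² if PAA(Q)_i > U_i, c_i = (PAA(Q)_i - L_i)² if PAA(Q)_i < L_i, else 0. Then mindist ≤ ED(Q, D_{j,|Q|}) for every represented offset j. -/
/-- The `i`-th PAA coefficient (0-indexed segment, segment length `s`) of the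
subsequence of `D` starting at 1-indexed offset `j`. -/
noncomputable def paaSub (D : ℕ → ℝ) (s j i : ℕ) : ℝ :=
  (∑ k ∈ Finset.range s, D (j + i * s + k)) / s

/-- The `i`-th PAA coefficient of the query `Q` (1-indexed series). -/
noncomputable def paaQ (Q : ℕ → ℝ) (s i : ℕ) : ℝ :=
  (∑ k ∈ Finset.range s, Q (1 + i * s + k)) / s

/-- Euclidean distance between `Q` (1-indexed, length `n`) and the subsequence of
`D` of length `n` starting at offset `j`. -/
noncomputable def edSub (Q D : ℕ → ℝ) (n j : ℕ) : ℝ :=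
  Real.sqrt (∑ t ∈ Finset.range n, (Q (1 + t) - D (j + t)) ^ 2)

/-- Per-segment mindist cost against the envelope `[L, U]`. -/
noncomputable def mindistCost (Q : ℕ → ℝ) (s : ℕ) (L U : ℕ → ℝ) (i : ℕ) : ℝ :=
  if paaQ Q s i > U i then (paaQ Q s i - U i) ^ 2
  else if paaQ Q s i < L i then (paaQ Q s i - L i) ^ 2
  else 0

private lemma sum_range_mul_split (f : ℕ → ℝ) (w s : ℕ) :
    ∑ t ∈ Finset.range (w * s), f t
      = ∑ i ∈ Finset.range w, ∑ k ∈ Finset.range s, f (i * s + k) := by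
  induction w with
  | zero => simp
  | succ n ih =>
    rw [Finset.sum_range_succ, ← ih, Nat.succ_mul, Finset.sum_range_add]

/-- if the envelope `[L, U]` contains the PAA coefficients of all the
represented subsequences `D_{j,|Q|}` (`j ∈ J`), then the mindist between `Q` and the
envelope lower-bounds `ED(Q, D_{j,|Q|})` for every represented offset `j`. -/
theorem mindist_le_ed (Q D : ℕ → ℝ) (w s : ℕ) (hs : 0 < s) (hw : 0 < w)
    (L U : ℕ → ℝ) (J : Set ℕ)
    (henv : ∀ j ∈ J, ∀ i < w, L i ≤ paaSub D s j i ∧ paaSub D s j i ≤ U i) :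
    ∀ j ∈ J,
      Real.sqrt s * Real.sqrt (∑ i ∈ Finset.range w, mindistCost Q s L U i) ≤
        edSub Q D (w * s) j := by
  intro j hj
  have hs' : (0:ℝ) < s := by exact_mod_cast hs
  -- Step 1: per-segment, cost ≤ (paaQ - paaSub)^2
  have hcost : ∀ i < w, mindistCost Q s L U i ≤ (paaQ Q s i - paaSub D s j i) ^ 2 := by
    intro i hi
    obtain ⟨hL, hU⟩ := henv j hj i hi
    unfold mindistCost
    split_ifs with h1 h2
    · nlinarith
    · nlinarith
    · positivity
  -- Step 2: per-segment Cauchy-Schwarz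
  have hcs : ∀ i : ℕ, s * (paaQ Q s i - paaSub D s j i) ^ 2
      ≤ ∑ k ∈ Finset.range s, (Q (1 + (i * s + k)) - D (j + (i * s + k))) ^ 2 := by
    intro i
    have hdiff : paaQ Q s i - paaSub D s j i
        = (∑ k ∈ Finset.range s, (Q (1 + (i * s + k)) - D (j + (i * s + k)))) / s := by
      unfold paaQ paaSub
      rw [div_sub_div_same, ← Finset.sum_sub_distrib]
      congr 1; apply Finset.sum_congr rfl; intro k _; ring_nf
    set A := ∑ k ∈ Finset.range s, (Q (1 + (i * s + k)) - D (j + (i * s + k))) with hA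
    set B := ∑ k ∈ Finset.range s, (Q (1 + (i * s + k)) - D (j + (i * s + k))) ^ 2 with hB
    have hsq := sq_sum_le_card_mul_sum_sq
      (s := Finset.range s) (f := fun k => Q (1 + (i * s + k)) - D (j + (i * s + k)))
    simp only [Finset.card_range] at hsq
    rw [hdiff]
    have heq : (s:ℝ) * (A / s) ^ 2 = A ^ 2 / s := by field_simp
    rw [heq, div_le_iff₀ hs']
    calc A ^ 2 ≤ (s:ℝ) * B := hsq
      _ = B * s := by ring
  -- Step 3: combine
  have key : (s : ℝ) * ∑ i ∈ Finset.range w, mindistCost Q s L U i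
      ≤ ∑ t ∈ Finset.range (w * s), (Q (1 + t) - D (j + t)) ^ 2 := by
    rw [sum_range_mul_split (fun t => (Q (1 + t) - D (j + t)) ^ 2) w s, Finset.mul_sum]
    apply Finset.sum_le_sum
    intro i hi
    calc (s : ℝ) * mindistCost Q s L U i
        ≤ (s : ℝ) * (paaQ Q s i - paaSub D s j i) ^ 2 := by
          exact mul_le_mul_of_nonneg_left (hcost i (Finset.mem_range.mp hi)) (le_of_lt hs')
      _ ≤ _ := hcs i
  unfold edSub
  rw [← Real.sqrt_mul (by positivity)]
  exact Real.sqrt_le_sqrt key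
end

section
/- The PAA lower bound for Euclidean distance: for two series X, Y of length ℓ = w·s, sqrt(ℓ/w) · sqrt(Σ_{i=1}^w (PAA(X)_i - PAA(Y)_i)²) ≤ ED(X, Y). -/
/-- The `i`-th PAA coefficient (0-indexed segment, segment length `s`) of `X`. -/
noncomputable def paa (X : ℕ → ℝ) (s i : ℕ) : ℝ :=
  (∑ k ∈ Finset.range s, X (i * s + k)) / s

lemma sum_range_mul_eq (f : ℕ → ℝ) (w s : ℕ) :
    ∑ k ∈ Finset.range (w * s), f k
      = ∑ i ∈ Finset.range w, ∑ j ∈ Finset.range s, f (i * s + j) := by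
  induction w with
  | zero => simp
  | succ n ih =>
    rw [Nat.succ_mul, Finset.sum_range_add, ih, Finset.sum_range_succ]

/-- the PAA lower bound for the Euclidean distance: for series `X`, `Y`
of length `ℓ = w·s`,
`sqrt(ℓ/w) · sqrt(Σ_{i<w} (PAA(X)_i - PAA(Y)_i)²) ≤ ED(X, Y)`. -/
theorem paa_lower_bound (X Y : ℕ → ℝ) (w s : ℕ) (hw : 0 < w) (hs : 0 < s) :
    Real.sqrt ((w * s : ℝ) / w) *
      Real.sqrt (∑ i ∈ Finset.range w, (paa X s i - paa Y s i) ^ 2) ≤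
    Real.sqrt (∑ k ∈ Finset.range (w * s), (X k - Y k) ^ 2) := by
  have hw' : (w : ℝ) ≠ 0 := Nat.cast_ne_zero.mpr hw.ne'
  have hs' : (0 : ℝ) < s := Nat.cast_pos.mpr hs
  have hws : ((w : ℝ) * s) / w = s := by field_simp
  rw [hws, ← Real.sqrt_mul (le_of_lt hs')]
  apply Real.sqrt_le_sqrt
  rw [sum_range_mul_eq (fun k => (X k - Y k) ^ 2) w s, Finset.mul_sum]
  apply Finset.sum_le_sum
  intro i _
  have key : (∑ j ∈ Finset.range s, (X (i * s + j) - Y (i * s + j))) ^ 2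
      ≤ (s : ℝ) * ∑ j ∈ Finset.range s, (X (i * s + j) - Y (i * s + j)) ^ 2 := by
    simpa using sq_sum_le_card_mul_sum_sq
      (s := Finset.range s) (f := fun j => X (i * s + j) - Y (i * s + j))
  have hpaa : paa X s i - paa Y s i
      = (∑ j ∈ Finset.range s, (X (i * s + j) - Y (i * s + j))) / s := by
    simp [paa, Finset.sum_sub_distrib, sub_div]
  have heq : (s : ℝ) * ((∑ j ∈ Finset.range s, (X (i * s + j) - Y (i * s + j))) / s) ^ 2
      = (∑ j ∈ Finset.range s, (X (i * s + j) - Y (i * s + j))) ^ 2 / s := by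
    field_simp
  rw [hpaa, heq, div_le_iff₀ hs']
  calc (∑ j ∈ Finset.range s, (X (i * s + j) - Y (i * s + j))) ^ 2
      ≤ (s : ℝ) * ∑ j ∈ Finset.range s, (X (i * s + j) - Y (i * s + j)) ^ 2 := key
    _ = (∑ j ∈ Finset.range s, (X (i * s + j) - Y (i * s + j)) ^ 2) * s := mul_comm _ _
end

section
/- The LB_PaL lower bound: let Q be a series with DTW envelope PAA coefficients PAA(L^DTW), PAA(U^DTW) over w segments, and let [L, U] be a ULISSE envelope whose per-segment symbol intervals [β_l(L_i), β_u(U_i)] contain the i-th PAA coefficient of every represented subsequence D'_{j,|Q|}. Define LB_PaL = sqrt(s)·sqrt(Σ_i c_i) with c_i = (β_l(L_i) - PAA(U^DTW)_i)² if β_l(L_i) > PAA(U^DTW)_i, c_i = (PAA(L^DTW)_i - β_u(U_i))² if PAA(L^DTW)_i > β_u(U_i), else 0. If LB_Keogh_{PAA_iSAX} lower bounds DTW_r for each individual subsequence, then LB_PaL ≤ DTW_r(Q, D'_{j,|Q|}) for every represented offset j. -/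
/-- Per-segment LB_Keogh cost between the PAA of the DTW envelope of the query,
`[paaL i, paaU i]`, and a PAA coefficient `x` of a candidate subsequence. -/
noncomputable def keoghSegCost (paaL paaU : ℕ → ℝ) (i : ℕ) (x : ℝ) : ℝ :=
  if x > paaU i then (x - paaU i) ^ 2
  else if x < paaL i then (paaL i - x) ^ 2
  else 0

/-- Per-segment LB_PaL cost between the PAA of the DTW envelope of the query and the
per-segment symbol interval `[βlL i, βuU i]` of the ULISSE envelope. -/
noncomputable def palSegCost (paaL paaU βlL βuU : ℕ → ℝ) (i : ℕ) : ℝ :=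
  if βlL i > paaU i then (βlL i - paaU i) ^ 2
  else if paaL i > βuU i then (paaL i - βuU i) ^ 2
  else 0

/-- the LB_PaL lower bound. Let the ULISSE envelope intervals
`[βlL i, βuU i]` contain the `i`-th PAA coefficient `paaSub j i` of every represented
subsequence (`j ∈ J`), and assume the per-subsequence PAA-iSAX Keogh lower bound
`sqrt s · sqrt (Σ_i keoghSegCost i (paaSub j i)) ≤ DTW_r(Q, D'_{j,|Q|}) = dtw j`.
Then `LB_PaL ≤ dtw j` for every represented offset `j`. -/
theorem lb_pal_le_dtw (w s : ℕ) (hs : 0 < s) (hw : 0 < w)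
    (paaL paaU βlL βuU : ℕ → ℝ) (hLU : ∀ i, paaL i ≤ paaU i)
    (J : Set ℕ) (paaSub : ℕ → ℕ → ℝ) (dtw : ℕ → ℝ)
    (hcontain : ∀ j ∈ J, ∀ i < w, βlL i ≤ paaSub j i ∧ paaSub j i ≤ βuU i)
    (hkeogh : ∀ j ∈ J,
      Real.sqrt s *
        Real.sqrt (∑ i ∈ Finset.range w, keoghSegCost paaL paaU i (paaSub j i)) ≤
        dtw j) :
    ∀ j ∈ J,
      Real.sqrt s *
        Real.sqrt (∑ i ∈ Finset.range w, palSegCost paaL paaU βlL βuU i) ≤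
        dtw j := by
  intro j hj
  refine le_trans ?_ (hkeogh j hj)
  refine mul_le_mul_of_nonneg_left (Real.sqrt_le_sqrt (Finset.sum_le_sum fun i hi => ?_)) (Real.sqrt_nonneg _)
  obtain ⟨h1, h2⟩ := hcontain j hj i (Finset.mem_range.mp hi)
  set x := paaSub j i
  unfold palSegCost keoghSegCost
  split_ifs with ha hb hc hd he
  · -- βlL i > paaU i, x > paaU i
    have : (0:ℝ) ≤ βlL i - paaU i := by linarith
    nlinarith
  · linarith
  · linarith
  · -- paaL i > βuU i, so x ≤ βuU i < paaL i ≤ paaU i, contradiction with x > paaU i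
    have := hLU i; linarith
  · nlinarith
  · have := hLU i; linarith
  · positivity
  · positivity
  · exact le_refl 0
end
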